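/- Let n ≥ 3 be odd. The discrete sine transform matrix S_n, which is the ((n−1)/2)×((n−1)/2) matrix with rows and columns indexed by 1,2,…,(n−1)/2 whose (r,s)-entry equals 2sin(2πrs/n)/√n, has the nonvanishing minors property if and only if n is prime. -/

import Mathlib

/-!
A composite odd `n = a b` with `3 ≤ a, b` gives the vanishing `1 × 1` minor
`2 sin(2π a b / n) / √n`.

For `p` prime, a singular minor on rows `r` and columns `s` gives, over `ℤ[θ] = ℤ[X] / Φ_p`, a
kernel vector `c` of the matrix `(θ^(r s) - θ^(-r s))`, which after dividing out powers of `θ - 1`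
(`ℤ[θ]` is Noetherian) is nonzero modulo `θ - 1`. The polynomial `∑ c_j (X^(s_j) - X^(p - s_j))`
vanishes at the `2k + 1` distinct points `1, θ^(± r_i)`, all `≡ 1` modulo `θ - 1`. Reduced to
`𝔽_p[X]` it is therefore a nonzero polynomial of degree `< p` with at most `2k` terms and a zero of
order `2k + 1` at `1`, which is impossible: a nonzero polynomial of degree `< p` over a domain of
characteristic `p` has a zero at `1` of order less than its number of terms.
-/

open Real Polynomial Matrix

namespace Polynomial

variable {R : Type*} [CommRing R]

theorem coeff_X_mul_derivative_sub_C_mul (P : R[X]) (e n : ℕ) :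
    (X * derivative P - C (e : R) * P).coeff n = ((n : R) - e) * P.coeff n := by
  rcases n with _ | n
  · simp
  · simp only [coeff_sub, coeff_X_mul, coeff_derivative, coeff_C_mul]
    push_cast
    ring

theorem eq_zero_of_X_sub_one_pow_card_support_dvd [IsDomain R] {p : ℕ} [CharP R p] {P : R[X]}
    (hP : P.support ⊆ Finset.range p) (hdvd : (X - 1) ^ P.support.card ∣ P) : P = 0 := by
  induction hm : P.support.card using Nat.strong_induction_on generalizing P with
  | _ m ih =>
    by_contra hP0
    rw [hm] at hdvd
    set e := P.natTrailingDegree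
    have he : e ∈ P.support := natTrailingDegree_mem_support_of_nonzero hP0
    have hlt : ∀ n ∈ P.support, n < p := fun n hn => Finset.mem_range.mp (hP hn)
    -- `X P' - e P` kills the lowest term of `P` and keeps a zero of order `#P.support - 1` at 1
    set Q := X * derivative P - C (e : R) * P with hQdef
    have hQ : Q.support ⊆ P.support.erase e := by
      intro n hn
      rw [mem_support_iff, coeff_X_mul_derivative_sub_C_mul] at hn
      exact Finset.mem_erase.mpr ⟨by rintro rfl; simp at hn,
        mem_support_iff.mpr (right_ne_zero_of_mul hn)⟩
    have hQcard : Q.support.card ≤ m - 1 := by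
      simpa [Finset.card_erase_of_mem he, hm] using Finset.card_le_card hQ
    have hQdvd : (X - 1) ^ Q.support.card ∣ Q := by
      refine (pow_dvd_pow _ hQcard).trans (dvd_sub ?_ ?_)
      · exact (pow_sub_one_dvd_derivative_of_pow_dvd hdvd).mul_left _
      · exact ((pow_dvd_pow _ (m.sub_le 1)).trans hdvd).mul_left _
    have hm0 : 0 < m := hm ▸ Finset.card_pos.mpr ⟨e, he⟩
    have hQ0 : Q = 0 := ih _ (by omega)
      ((hQ.trans (Finset.erase_subset _ _)).trans hP) hQdvd rfl
    have hmono : P.support = {e} := by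
      refine Finset.eq_singleton_iff_unique_mem.mpr ⟨he, fun n hn => ?_⟩
      have := coeff_X_mul_derivative_sub_C_mul P e n
      rw [← hQdef, hQ0, coeff_zero, eq_comm, mul_eq_zero, sub_eq_zero,
        or_iff_left (mem_support_iff.mp hn)] at this
      simpa [Nat.ModEq, Nat.mod_eq_of_lt (hlt n hn), Nat.mod_eq_of_lt (hlt e he)] using
        (CharP.natCast_eq_natCast R p).mp this
    have hroot : P.eval 1 = 0 := by
      obtain ⟨S, hS⟩ := hdvd
      rw [hS, eval_mul, eval_pow, eval_sub, eval_X, eval_one, sub_self, zero_pow hm0.ne',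
        zero_mul]
    rw [eval_eq_sum, sum_def, hmono, Finset.sum_singleton, one_pow, mul_one] at hroot
    exact mem_support_iff.mp he hroot

theorem X_sub_one_pow_dvd_map_of_isRoot [IsDomain R] {S : Type*} [CommRing S] (φ : R →+* S)
    {P : R[X]} {ι : Type*} [Fintype ι] {e : ι → R} (he : Function.Injective e)
    (hroot : ∀ i, P.IsRoot (e i)) (hφ : ∀ i, φ (e i) = 1) :
    (X - 1) ^ Fintype.card ι ∣ P.map φ := by
  rcases eq_or_ne P 0 with rfl | hP
  · simp
  have hdvd : ∏ i, (X - C (e i)) ∣ P := by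
    have hle : Finset.univ.val.map e ≤ P.roots :=
      (Multiset.le_iff_subset ((Finset.univ.nodup).map he)).mpr fun x hx => by
        obtain ⟨i, -, rfl⟩ := Multiset.mem_map.mp hx
        exact (mem_roots hP).mpr (hroot i)
    have := (Multiset.prod_X_sub_C_dvd_iff_le_roots hP _).mpr hle
    rwa [Multiset.map_map] at this
  simpa [Polynomial.map_prod, hφ] using Polynomial.map_dvd φ hdvd

end Polynomial

theorem Matrix.exists_mulVec_eq_zero_not_dvd {R : Type*} [CommRing R] [IsDomain R]
    [WfDvdMonoid R] {m n : Type*} [Fintype n] {ϖ : R} (hϖ : ¬IsUnit ϖ) {M : Matrix m n R}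
    {v : n → R} (hv : v ≠ 0) (hMv : M *ᵥ v = 0) : ∃ c, M *ᵥ c = 0 ∧ ∃ j, ¬ϖ ∣ c j := by
  obtain ⟨j₀, hj₀⟩ := Function.ne_iff.mp hv
  obtain ⟨c, ⟨hMc, hc₀⟩, hmin⟩ := ((wellFounded_dvdNotUnit (α := R)).onFun
    (f := fun c : n → R => c j₀)).has_min {c | M *ᵥ c = 0 ∧ c j₀ ≠ 0} ⟨v, hMv, hj₀⟩
  refine ⟨c, hMc, ?_⟩
  by_contra! hdvd
  choose w hw using hdvd
  have hc : c = ϖ • w := funext hw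
  have hϖ0 : ϖ ≠ 0 := by rintro rfl; simp [hc] at hc₀
  have hw₀ : w j₀ ≠ 0 := by rintro h; simp [hc, h] at hc₀
  have hMw : M *ᵥ w = 0 := by
    rw [hc, mulVec_smul] at hMc
    exact (smul_eq_zero.mp hMc).resolve_left hϖ0
  exact hmin w ⟨hMw, hw₀⟩ ⟨hw₀, ϖ, hϖ, (hw j₀).trans (mul_comm _ _)⟩

theorem IsPrimitiveRoot.exists_injective_lift_adjoinRoot_cyclotomic {K : Type*} [Field K]
    [CharZero K] {n : ℕ} (hn : 0 < n) {ζ : K} (hζ : IsPrimitiveRoot ζ n) :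
    ∃ f : AdjoinRoot (cyclotomic n ℤ) →+* K,
      Function.Injective f ∧ f (AdjoinRoot.root _) = ζ := by
  have hroot : (cyclotomic n ℤ).eval₂ (Int.castRingHom K) ζ = 0 := by
    rw [eval₂_eq_eval_map, map_cyclotomic]
    exact hζ.isRoot_cyclotomic hn
  refine ⟨AdjoinRoot.lift _ ζ hroot, (injective_iff_map_eq_zero _).mpr fun x hx => ?_,
    AdjoinRoot.lift_root hroot⟩
  obtain ⟨q, rfl⟩ := AdjoinRoot.mk_surjective x
  rw [AdjoinRoot.lift_mk] at hx
  rw [AdjoinRoot.mk_eq_zero, cyclotomic_eq_minpoly hζ hn]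
  exact minpoly.isIntegrallyClosed_dvd (hζ.isIntegral hn) (by rwa [aeval_def])

theorem exists_lift_adjoinRoot_cyclotomic_zmod (p : ℕ) [Fact p.Prime] :
    ∃ φ : AdjoinRoot (cyclotomic p ℤ) →+* ZMod p, φ (AdjoinRoot.root _) = 1 ∧
      ∀ x, φ x = 0 → AdjoinRoot.root _ - 1 ∣ x := by
  set θ := AdjoinRoot.root (cyclotomic p ℤ)
  have hroot : (cyclotomic p ℤ).eval₂ (Int.castRingHom (ZMod p)) 1 = 0 := by
    simp [eval₂_at_one, eval_one_cyclotomic_prime]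
  refine ⟨AdjoinRoot.lift _ 1 hroot, AdjoinRoot.lift_root hroot, fun x hx => ?_⟩
  obtain ⟨q, rfl⟩ := AdjoinRoot.mk_surjective x
  -- the residue of `q(θ)` modulo `θ - 1` is `q(1)`, a multiple of `p = Φ_p(1)`, and `Φ_p(θ) = 0`
  have hq : θ - 1 ∣ AdjoinRoot.mk _ q - algebraMap ℤ _ (q.eval 1) := by
    have := sub_dvd_eval_sub θ 1 (q.map (algebraMap ℤ _))
    rwa [eval_map_algebraMap, AdjoinRoot.aeval_eq, eval_one_map] at this
  have hp : θ - 1 ∣ (p : AdjoinRoot (cyclotomic p ℤ)) := by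
    have hθ : (cyclotomic p (AdjoinRoot (cyclotomic p ℤ))).eval θ = 0 := by
      simpa [eval₂_eq_eval_map] using AdjoinRoot.eval₂_root (cyclotomic p ℤ)
    simpa [hθ, eval_one_cyclotomic_prime] using
      sub_dvd_eval_sub θ 1 (cyclotomic p (AdjoinRoot (cyclotomic p ℤ)))
  rw [AdjoinRoot.lift_mk, eval₂_at_one, eq_intCast, ZMod.intCast_zmod_eq_zero_iff_dvd] at hx
  obtain ⟨u, hu⟩ := hx
  simpa [hu] using hq.add (hp.mul_right u)

theorem pow_eq_pow_sub_of_mul_eq_one {M : Type*} [CommMonoid M] {p : ℕ} {x y : M}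
    (hxy : x * y = 1) (hx : x ^ p = 1) {a : ℕ} (ha : a ≤ p) : x ^ a = y ^ (p - a) := by
  calc x ^ a = x ^ a * (x * y) ^ (p - a) := by rw [hxy, one_pow, mul_one]
    _ = x ^ p * y ^ (p - a) := by rw [mul_pow, ← mul_assoc, ← pow_add, Nat.add_sub_cancel' ha]
    _ = y ^ (p - a) := by rw [hx, one_mul]

section SinPoly

variable {R : Type*} [CommRing R] (p : ℕ) {ι κ : Type*}

def sinMatrix (x : R) (r : κ → ℕ) (s : ι → ℕ) : Matrix κ ι R :=
  of fun i j => x ^ (r i * s j) - x ^ (r i * (p - s j))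

theorem map_sinMatrix {S : Type*} [CommRing S] (f : R →+* S) (x : R) (r : κ → ℕ)
    (s : ι → ℕ) : (sinMatrix p x r s).map f = sinMatrix p (f x) r s := by
  ext i j
  simp [sinMatrix]

variable [Fintype ι]

noncomputable def sinPoly (s : ι → ℕ) (c : ι → R) : R[X] :=
  ∑ j, C (c j) * (X ^ s j - X ^ (p - s j))

variable {p}

theorem sinMatrix_mulVec (x : R) (r : κ → ℕ) (s : ι → ℕ) (c : ι → R) (i : κ) :
    (sinMatrix p x r s *ᵥ c) i = (sinPoly p s c).eval (x ^ r i) := by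
  simp [sinMatrix, sinPoly, mulVec, dotProduct, eval_finsetSum, ← pow_mul, mul_comm]

theorem sinPoly_eval_one (s : ι → ℕ) (c : ι → R) : (sinPoly p s c).eval 1 = 0 := by
  simp [sinPoly, eval_finsetSum]

theorem sinPoly_eval_of_mul_eq_one {s : ι → ℕ} (hs : ∀ j, s j ≤ p) (c : ι → R) {x y : R}
    (hxy : x * y = 1) (hx : x ^ p = 1) :
    (sinPoly p s c).eval y = -(sinPoly p s c).eval x := by
  have hterm : ∀ j, y ^ s j - y ^ (p - s j) = -(x ^ s j - x ^ (p - s j)) := fun j => by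
    rw [pow_eq_pow_sub_of_mul_eq_one hxy hx (hs j),
      pow_eq_pow_sub_of_mul_eq_one hxy hx (p.sub_le (s j)), Nat.sub_sub_self (hs j)]
    ring
  simp only [sinPoly, eval_finsetSum, ← Finset.sum_neg_distrib, eval_mul, eval_C, eval_sub,
    eval_pow, eval_X, hterm, mul_neg]

theorem support_sinPoly_subset (s : ι → ℕ) (c : ι → R) :
    (sinPoly p s c).support ⊆ Finset.univ.image s ∪ Finset.univ.image (p - s ·) := by
  intro n hn
  contrapose! hn
  simp only [Finset.mem_union, Finset.mem_image, Finset.mem_univ, true_and, not_or,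
    not_exists] at hn
  simp [sinPoly, finsetSum_coeff, coeff_X_pow, Ne.symm (hn.1 _), Ne.symm (hn.2 _)]

theorem coeff_sinPoly {s : ι → ℕ} (hs : Function.Injective s) (hs' : ∀ i j, s i ≠ p - s j)
    (c : ι → R) (j : ι) : (sinPoly p s c).coeff (s j) = c j := by
  classical
  simp [sinPoly, finsetSum_coeff, coeff_X_pow, hs.eq_iff, hs']

theorem map_sinPoly {S : Type*} [CommRing S] (φ : R →+* S) (s : ι → ℕ) (c : ι → R) :
    (sinPoly p s c).map φ = sinPoly p s (φ ∘ c) := by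
  simp [sinPoly, Polynomial.map_sum]

end SinPoly

noncomputable def dstSubmatrix (n : ℕ) {ι κ : Type*} (r : κ → ℕ) (s : ι → ℕ) : Matrix κ ι ℝ :=
  of fun i j => 2 * Real.sin (2 * π * (r i * s j : ℕ) / n) / √n

theorem sinMatrix_exp_eq_smul_dstSubmatrix {n : ℕ} (hn : n ≠ 0) {ι κ : Type*} (r : κ → ℕ)
    {s : ι → ℕ} (hs : ∀ j, s j ≤ n) :
    sinMatrix n (Complex.exp (2 * π * Complex.I / n)) r s =
      (Complex.I * √n) • (dstSubmatrix n r s).map Complex.ofRealHom := by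
  set ζ := Complex.exp (2 * π * Complex.I / n)
  have hζn : ζ ^ n = 1 := (Complex.isPrimitiveRoot_exp n hn).pow_eq_one
  ext i j
  set u : ℝ := 2 * π * (r i * s j : ℕ) / n
  have hpow : ζ ^ (r i * s j) = Complex.exp (u * Complex.I) := by
    rw [← Complex.exp_nat_mul]
    push_cast [u]
    ring_nf
  have hinv : ζ ^ (r i * (n - s j)) = Complex.exp (-u * Complex.I) := by
    rw [neg_mul, Complex.exp_neg, ← hpow]
    refine eq_inv_of_mul_eq_one_left ?_
    rw [← pow_add, ← Nat.mul_add, Nat.sub_add_cancel (hs j), pow_mul', hζn, one_pow]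
  have hsqrt : (√n : ℂ) ≠ 0 := by exact_mod_cast (Real.sqrt_pos.mpr (by positivity)).ne'
  simp only [sinMatrix, dstSubmatrix, of_apply, Matrix.smul_apply, Matrix.map_apply,
    smul_eq_mul, hpow, hinv, Complex.ofRealHom_eq_coe]
  change _ = _ * ((2 * Real.sin u / √n : ℝ) : ℂ)
  push_cast
  rw [mul_assoc, mul_div_cancel₀ _ hsqrt]
  linear_combination (-Complex.I) * Complex.two_sin (u : ℂ) +
    (Complex.exp (u * Complex.I) - Complex.exp (-u * Complex.I)) * Complex.I_sq

theorem map_sinPoly_eq_zero {R K : Type*} [CommRing R] [IsDomain R] [CommRing K] [IsDomain K]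
    {p : ℕ} (hp : 0 < p) [CharP K p] {θ : R} (hθ : IsPrimitiveRoot θ p) (φ : R →+* K)
    (hφ : φ θ = 1) {ι : Type*} [Fintype ι] {r s : ι → ℕ} (hr : Function.Injective r)
    (hr_pos : ∀ i, 0 < r i) (hr_lt : ∀ i, 2 * r i < p) (hs_pos : ∀ j, 0 < s j)
    (hs_lt : ∀ j, 2 * s j < p) {c : ι → R} (hc : sinMatrix p θ r s *ᵥ c = 0) :
    (sinPoly p s c).map φ = 0 := by
  -- `sinPoly p s c` vanishes at the `2 |ι| + 1` distinct points `θ ^ a o`, all sent to 1 by `φ`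
  let a : Option (ι ⊕ ι) → ℕ := fun o => o.elim 0 (Sum.elim r (p - r ·))
  have ha_lt : ∀ o, a o < p := by
    rintro (_ | i | i) <;> simp only [a, Option.elim, Sum.elim] <;> grind
  have ha : Function.Injective a := by
    rintro (_ | i | i) (_ | j | j) h <;> simp only [a, Option.elim, Sum.elim] at h <;>
      grind [hr.eq_iff]
  have hroot : ∀ o, (sinPoly p s c).IsRoot (θ ^ a o) := by
    have hθp : θ ^ p = 1 := hθ.pow_eq_one
    have hrow : ∀ i, (sinPoly p s c).eval (θ ^ r i) = 0 := fun i => by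
      rw [← sinMatrix_mulVec, hc, Pi.zero_apply]
    rintro (_ | i | i)
    · rw [IsRoot, show a none = 0 from rfl, pow_zero, sinPoly_eval_one]
    · exact hrow i
    · rw [IsRoot, show a (some (.inr i)) = p - r i from rfl,
        sinPoly_eval_of_mul_eq_one (fun j => by grind) c (x := θ ^ r i), hrow i, neg_zero]
      · rw [← pow_add, Nat.add_sub_cancel' (by grind), hθp]
      · rw [← pow_mul, mul_comm, pow_mul, hθp, one_pow]
  have hdvd : (X - 1) ^ (2 * Fintype.card ι + 1) ∣ (sinPoly p s c).map φ := by
    have := X_sub_one_pow_dvd_map_of_isRoot φ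
      (fun o o' h => ha (hθ.pow_inj (ha_lt o) (ha_lt o') h)) hroot
      (fun o => by rw [map_pow, hφ, one_pow])
    rwa [Fintype.card_option, Fintype.card_sum, ← two_mul] at this
  have hsupp := support_sinPoly_subset (p := p) s (φ ∘ c)
  rw [map_sinPoly] at hdvd ⊢
  refine eq_zero_of_X_sub_one_pow_card_support_dvd (p := p) (hsupp.trans ?_)
    ((pow_dvd_pow _ ?_).trans hdvd)
  · intro n hn
    simp only [Finset.mem_union, Finset.mem_image, Finset.mem_univ, true_and] at hn
    rw [Finset.mem_range]
    grind
  · grw [Finset.card_le_card hsupp, Finset.card_union_le, Finset.card_image_le,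
      Finset.card_image_le, Finset.card_univ]
    omega

theorem det_dstSubmatrix_ne_zero {p : ℕ} [Fact p.Prime] {ι : Type*} [Fintype ι] [DecidableEq ι]
    {r s : ι → ℕ} (hr : Function.Injective r) (hr_pos : ∀ i, 0 < r i)
    (hr_lt : ∀ i, 2 * r i < p) (hs : Function.Injective s) (hs_pos : ∀ j, 0 < s j)
    (hs_lt : ∀ j, 2 * s j < p) : (dstSubmatrix p r s).det ≠ 0 := by
  intro hdet
  have hp : 0 < p := (Fact.out : p.Prime).pos
  have hζ := Complex.isPrimitiveRoot_exp p hp.ne'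
  obtain ⟨f, hf, hfθ⟩ := hζ.exists_injective_lift_adjoinRoot_cyclotomic hp
  obtain ⟨φ, hφθ, hker⟩ := exists_lift_adjoinRoot_cyclotomic_zmod p
  set θ := AdjoinRoot.root (cyclotomic p ℤ)
  have : IsDomain (AdjoinRoot (cyclotomic p ℤ)) := hf.isDomain
  have hθ : IsPrimitiveRoot θ p := (hfθ ▸ hζ).of_map_of_injective hf
  have hdetM : (sinMatrix p θ r s).det = 0 := by
    apply hf
    rw [map_zero, RingHom.map_det, RingHom.mapMatrix_apply, map_sinMatrix, hfθ,
      sinMatrix_exp_eq_smul_dstSubmatrix hp.ne' r (fun j => by grind), det_smul,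
      ← RingHom.mapMatrix_apply, ← RingHom.map_det, hdet, map_zero, mul_zero]
  obtain ⟨v, hv, hMv⟩ := exists_mulVec_eq_zero_iff.mpr hdetM
  have hθ₁ : ¬IsUnit (θ - 1) := fun h => by simpa [hφθ] using h.map φ
  obtain ⟨c, hMc, j, hj⟩ := exists_mulVec_eq_zero_not_dvd hθ₁ hv hMv
  have hP := map_sinPoly_eq_zero hp hθ φ hφθ hr hr_pos hr_lt hs_pos hs_lt hMc
  refine hj (hker _ ?_)
  rw [← coeff_sinPoly (p := p) hs (fun i j => by grind) c j, ← coeff_map, hP, coeff_zero]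

theorem dstSubmatrix_apply_eq_zero_of_mul_eq {n : ℕ} {ι κ : Type*} {r : κ → ℕ} {s : ι → ℕ}
    {i : κ} {j : ι} (h : r i * s j = n) : dstSubmatrix n r s i j = 0 := by
  rcases eq_or_ne n 0 with rfl | hn
  · simp [dstSubmatrix]
  · rw [dstSubmatrix, of_apply, h, mul_div_cancel_right₀ _ (Nat.cast_ne_zero.mpr hn),
      sin_two_pi, mul_zero, zero_div]

theorem Nat.exists_three_le_mul_eq_of_odd_of_not_prime {n : ℕ} (hn : 2 ≤ n) (hodd : Odd n)
    (hnp : ¬n.Prime) : ∃ a b, 3 ≤ a ∧ 3 ≤ b ∧ a * b = n := by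
  obtain ⟨a, b, ha, hb, rfl⟩ := (Nat.not_prime_iff_exists_mul_eq hn).mp hnp
  obtain ⟨⟨x, rfl⟩, ⟨y, rfl⟩⟩ := Nat.odd_mul.mp hodd
  rcases x with _ | x
  · simp at hb
  rcases y with _ | y
  · simp at ha
  exact ⟨_, _, by omega, by omega, rfl⟩

/-- The discrete sine transform matrix `S_n` (for odd `n ≥ 3`), of size
`(n-1)/2 × (n-1)/2` with rows and columns indexed by `1,…,(n-1)/2`, whose `(r,s)`-entry
is `2sin(2πrs/n)/√n`, has the nonvanishing minors property if and only if `n` is prime. -/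
theorem dst_nonvanishing_minors_iff (n : ℕ) (hn : 3 ≤ n) (hodd : Odd n) :
    (∀ (k : ℕ) (ri ci : Fin k → Fin ((n - 1) / 2)),
      Function.Injective ri → Function.Injective ci →
      (Matrix.of fun i j : Fin k =>
        2 * Real.sin (2 * Real.pi * (((ri i : ℕ) + 1) * ((ci j : ℕ) + 1) : ℕ) / n)
          / Real.sqrt n).det ≠ 0)
    ↔ n.Prime := by
  refine ⟨fun h => ?_, fun hp k ri ci hri hci => ?_⟩
  · by_contra hnp
    obtain ⟨a, b, ha, hb, rfl⟩ :=
      Nat.exists_three_le_mul_eq_of_odd_of_not_prime (by omega) hodd hnp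
    have : a * 3 ≤ a * b := Nat.mul_le_mul_left a hb
    have : 3 * b ≤ a * b := Nat.mul_le_mul_right b ha
    refine h 1 (fun _ => ⟨a - 1, by omega⟩) (fun _ => ⟨b - 1, by omega⟩)
      (Function.injective_of_subsingleton _) (Function.injective_of_subsingleton _) ?_
    have hab : (a - 1 + 1) * (b - 1 + 1) = a * b := by
      rw [Nat.sub_add_cancel (by omega), Nat.sub_add_cancel (by omega)]
    rw [det_unique]
    exact dstSubmatrix_apply_eq_zero_of_mul_eq hab
  · have := Fact.mk hp
    have hlt : ∀ i : Fin ((n - 1) / 2), 2 * ((i : ℕ) + 1) < n := fun i => by omega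
    exact det_dstSubmatrix_ne_zero (r := fun i => (ri i : ℕ) + 1)
      (s := fun j => (ci j : ℕ) + 1)
      ((add_left_injective 1).comp (Fin.val_injective.comp hri)) (fun _ => Nat.succ_pos _)
      (fun i => hlt (ri i)) ((add_left_injective 1).comp (Fin.val_injective.comp hci))
      (fun _ => Nat.succ_pos _) (fun j => hlt (ci j))
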